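/- arXiv:1803.05885 — 5 statements merged into one kernel-verified Lean document; each statement's English description precedes it below -/
import Mathlib

section
/- In a finite directed graph, for any two vertex sets A and C, the maximum number of mutually vertex-disjoint directed paths from A to C equals the minimum cardinality of an A–C disconnecting set (directed vertex version of Menger's theorem, allowing the disconnecting set to intersect A and C). -/
/-- `p` is a directed path (nonempty, no repeated vertices) starting in `A` and ending in `C`. -/
def IsPathFrom {V : Type*} (E : V → V → Prop) (A C : Set V) (p : List V) : Prop :=
  p ≠ [] ∧ p.Chain' E ∧ p.Nodup ∧
    (∃ a ∈ A, p.head? = some a) ∧ (∃ c ∈ C, p.getLast? = some c)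

/-- There exist `n` mutually vertex-disjoint directed paths from `A` to `C`. -/
def HasDisjointPaths {V : Type*} (E : V → V → Prop) (A C : Set V) (n : ℕ) : Prop :=
  ∃ f : Fin n → List V, (∀ t, IsPathFrom E A C (f t)) ∧
    ∀ s t, s ≠ t → ∀ v, v ∈ f s → v ∉ f t

/-- `b(A → C)`: the maximum number of mutually vertex-disjoint directed paths from `A` to `C`. -/
noncomputable def maxDisjointPaths {V : Type*} (E : V → V → Prop) (A C : Set V) : ℕ :=
  sSup {n | HasDisjointPaths E A C n}

/-- `B` is an `A`–`C` disconnecting set: every directed path from `A` to `C` meets `B`. -/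
def IsDisconnecting {V : Type*} (E : V → V → Prop) (A C B : Set V) : Prop :=
  ∀ p : List V, IsPathFrom E A C p → ∃ v ∈ B, v ∈ p

open List

namespace MengerAux
variable {V : Type*}

lemma mem_of_getLast?' {l : List V} {a : V} (h : l.getLast? = some a) : a ∈ l := by
  obtain ⟨hne, heq⟩ := List.mem_getLast?_eq_getLast (show a ∈ l.getLast? from h)
  exact heq ▸ List.getLast_mem hne

lemma cons_head_tail' {l : List V} {a : V} (h : l.head? = some a) : l = a :: l.tail := by
  cases l with
  | nil => simp at h
  | cons b t => simp only [List.head?_cons, Option.some.injEq] at h; simp [h]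

lemma getLast?_cons_ne_nil {a : V} {t : List V} (h : t ≠ []) :
    (a :: t).getLast? = t.getLast? := by
  simpa using List.getLast?_append_of_ne_nil [a] h

/-- extract a nodup path from a walk with the same endpoints -/
lemma walk_to_path (E : V → V → Prop) :
    ∀ (n : ℕ) (l : List V), l.length ≤ n → l.Chain' E →
      ∃ p : List V, p.Chain' E ∧ p.Nodup ∧ p.head? = l.head? ∧
        p.getLast? = l.getLast? ∧ ∀ v ∈ p, v ∈ l := by
  intro n
  induction n with
  | zero =>
    intro l hl _
    have : l = [] := List.length_eq_zero_iff.mp (Nat.le_zero.mp hl)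
    subst this
    exact ⟨[], by simp [List.Chain'], by simp, rfl, rfl, by simp⟩
  | succ n ih =>
    intro l hl hch
    match l with
    | [] => exact ⟨[], by simp [List.Chain'], by simp, rfl, rfl, by simp⟩
    | a :: t =>
      by_cases ha : a ∈ t
      · obtain ⟨u, w, huw⟩ := List.append_of_mem ha
        have hsuf : (a :: w) <:+ (a :: t) := by
          rw [huw]
          exact ⟨a :: u, by simp⟩
        have hlen : (a :: w).length ≤ n := by
          have := hl
          rw [huw] at this
          simp only [List.length_cons, List.length_append] at this ⊢
          omega
        obtain ⟨p, h1, h2, h3, h4, h5⟩ := ih (a :: w) hlen (hch.suffix hsuf)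
        refine ⟨p, h1, h2, by simpa using h3, ?_, fun v hv => hsuf.sublist.subset (h5 v hv)⟩
        rw [h4, huw, show a :: (u ++ a :: w) = (a :: u) ++ (a :: w) by simp,
          List.getLast?_append_cons]
      · have hlen : t.length ≤ n := by simpa using hl
        obtain ⟨p, h1, h2, h3, h4, h5⟩ := ih t hlen hch.tail
        refine ⟨a :: p, ?_, ?_, by simp, ?_, ?_⟩
        · simp only [List.Chain']; rw [List.isChain_cons]
          refine ⟨fun y hy => ?_, h1⟩
          rw [h3] at hy
          exact (List.isChain_cons.mp hch).1 y hy
        · exact List.nodup_cons.mpr ⟨fun hap => ha (h5 a hap), h2⟩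
        · cases ht : t with
          | nil =>
            subst ht
            have : p = [] := by
              have := h3; simpa [List.head?_eq_none_iff] using this
            simp [this]
          | cons b t' =>
            have hpne : p ≠ [] := by
              intro hp; rw [hp] at h3; simp [ht] at h3
            rw [getLast?_cons_ne_nil hpne, h4, ht,
              show (a :: b :: t').getLast? = (b :: t').getLast? from
                getLast?_cons_ne_nil (by simp)]
        · intro v hv
          rcases List.mem_cons.mp hv with h | h
          · simp [h]
          · exact List.mem_cons_of_mem a (h5 v h)

/-- truncate a path at its first vertex in `S` -/
lemma truncate_first (E : V → V → Prop) (S : Set V) :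
    ∀ (l : List V), l.Chain' E → l.Nodup → (∃ v ∈ l, v ∈ S) →
      ∃ p : List V, p.Chain' E ∧ p.Nodup ∧ p ≠ [] ∧ p.head? = l.head? ∧
        (∃ w, p.getLast? = some w ∧ w ∈ S) ∧
        (∀ u ∈ p, u ∈ S → some u = p.getLast?) ∧ (∀ v ∈ p, v ∈ l) := by
  intro l
  induction l with
  | nil => rintro _ _ ⟨v, hv, -⟩; simp at hv
  | cons a t ih =>
    intro hch hnd hex
    by_cases ha : a ∈ S
    · exact ⟨[a], by simp [List.Chain'], by simp, by simp, by simp, ⟨a, by simp, ha⟩,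
        by simp +contextual, by simp⟩
    · obtain ⟨v, hv, hvS⟩ := hex
      have hvt : v ∈ t := by
        rcases List.mem_cons.mp hv with h | h
        · exact absurd (h ▸ hvS) ha
        · exact h
      obtain ⟨p, h1, h2, h3, h4, ⟨w, hw1, hw2⟩, h6, h7⟩ :=
        ih hch.tail (List.nodup_cons.mp hnd).2 ⟨v, hvt, hvS⟩
      have hanp : a ∉ p := fun hap => (List.nodup_cons.mp hnd).1 (h7 a hap)
      refine ⟨a :: p, ?_, List.nodup_cons.mpr ⟨hanp, h2⟩, by simp, by simp, ?_, ?_, ?_⟩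
      · simp only [List.Chain']; rw [List.isChain_cons]
        refine ⟨fun y hy => ?_, h1⟩
        rw [h4] at hy
        exact (List.isChain_cons.mp hch).1 y hy
      · refine ⟨w, ?_, hw2⟩
        rw [show (a :: p).getLast? = p.getLast? from
          by simpa using List.getLast?_append_of_ne_nil [a] h3]
        exact hw1
      · intro u hu huS
        rcases List.mem_cons.mp hu with h | h
        · exact absurd (h ▸ huS) ha
        · rw [show (a :: p).getLast? = p.getLast? from
            by simpa using List.getLast?_append_of_ne_nil [a] h3]
          exact h6 u h huS
      · intro u hu
        rcases List.mem_cons.mp hu with h | h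
        · simp [h]
        · exact List.mem_cons_of_mem a (h7 u h)

/-- truncate a path at its last vertex in `S` -/
lemma truncate_last (E : V → V → Prop) (S : Set V) (l : List V)
    (hch : l.Chain' E) (hnd : l.Nodup) (hex : ∃ v ∈ l, v ∈ S) :
    ∃ q : List V, q.Chain' E ∧ q.Nodup ∧ q ≠ [] ∧ q.getLast? = l.getLast? ∧
      (∃ w, q.head? = some w ∧ w ∈ S) ∧
      (∀ u ∈ q, u ∈ S → some u = q.head?) ∧ (∀ v ∈ q, v ∈ l) := by
  obtain ⟨p, h1, h2, h3, h4, ⟨w, hw1, hw2⟩, h6, h7⟩ :=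
    truncate_first (flip E) S l.reverse
      (List.isChain_reverse.mpr (by simpa [Function.flip_def, List.Chain'] using hch))
      (by simpa using hnd) (by simpa using hex)
  refine ⟨p.reverse, ?_, by simpa using h2, by simpa using h3, ?_, ⟨w, ?_, hw2⟩, ?_, ?_⟩
  · simp only [List.Chain']; rw [List.isChain_reverse]
    exact h1.imp fun a b h => h
  · rw [List.getLast?_reverse, h4, List.head?_reverse]
  · rw [List.head?_reverse, hw1]
  · intro u hu huS
    rw [List.head?_reverse]
    exact h6 u (List.mem_reverse.mp hu) huS
  · intro u hu
    have := h7 u (List.mem_reverse.mp hu)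
    simpa using this
lemma chain'_restrict {E : V → V → Prop} {x y : V} :
    ∀ (l : List V), l.Chain' E → x ∉ l.dropLast →
      l.Chain' (fun u v => E u v ∧ ¬(u = x ∧ v = y))
  | [] => by simp [List.Chain']
  | [a] => by simp [List.Chain']
  | a :: b :: t => by
    intro h hx
    rw [List.dropLast_cons₂, List.mem_cons] at hx
    push_neg at hx
    simp only [List.Chain'] at h ⊢; rw [List.isChain_cons_cons] at h ⊢
    exact ⟨⟨h.1, fun hc => hx.1 hc.1.symm⟩, chain'_restrict (b :: t) h.2 hx.2⟩

lemma exists_split_edge {E : V → V → Prop} {x y : V} :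
    ∀ (l : List V), l.Chain' E →
      ¬ l.Chain' (fun u v => E u v ∧ ¬(u = x ∧ v = y)) →
      ∃ l₁ l₂, l = l₁ ++ x :: y :: l₂
  | [] => by simp [List.Chain']
  | [a] => by simp [List.Chain']
  | a :: b :: t => by
    intro h hn
    simp only [List.Chain'] at h; rw [List.isChain_cons_cons] at h
    by_cases hab : a = x ∧ b = y
    · exact ⟨[], t, by simp [hab.1, hab.2]⟩
    · have hn' : ¬ (b :: t).Chain' (fun u v => E u v ∧ ¬(u = x ∧ v = y)) :=
        fun hbt => hn (List.isChain_cons_cons.mpr ⟨⟨h.1, hab⟩, hbt⟩)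
      obtain ⟨l₁, l₂, hl⟩ := exists_split_edge (b :: t) h.2 hn'
      exact ⟨a :: l₁, l₂, by rw [List.cons_append, ← hl]⟩

lemma hdp_mono_rel {E E' : V → V → Prop} {A C : Set V} {k : ℕ}
    (hEE : ∀ a b, E' a b → E a b) (h : HasDisjointPaths E' A C k) :
    HasDisjointPaths E A C k := by
  obtain ⟨f, hf, hdisj⟩ := h
  exact ⟨f, fun t => ⟨(hf t).1, (hf t).2.1.imp hEE, (hf t).2.2⟩, hdisj⟩

lemma hdp_mono_nat {E : V → V → Prop} {A C : Set V} {k n : ℕ}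
    (hkn : k ≤ n) (h : HasDisjointPaths E A C n) : HasDisjointPaths E A C k := by
  obtain ⟨f, hf, hdisj⟩ := h
  exact ⟨f ∘ Fin.castLE hkn, fun t => hf _,
    fun s t hst v => hdisj _ _ (fun hc => hst (Fin.castLE_injective hkn hc)) v⟩

lemma count_le [Finite V] {E : V → V → Prop} {A C B : Set V} {n : ℕ}
    (hB : IsDisconnecting E A C B) (hn : HasDisjointPaths E A C n) : n ≤ B.ncard := by
  obtain ⟨f, hf, hdisj⟩ := hn
  choose g hg1 hg2 using fun t => hB (f t) (hf t)
  have hinj : Function.Injective (fun t => (⟨g t, hg1 t⟩ : B)) := by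
    intro s t hst
    simp only [Subtype.mk.injEq] at hst
    by_contra hne
    exact hdisj s t hne (g s) (hg2 s) (hst ▸ hg2 t)
  calc n = Nat.card (Fin n) := by simp
    _ ≤ Nat.card B := Nat.card_le_card_of_injective _ hinj
    _ = B.ncard := Nat.card_coe_set_eq B

lemma bdd [Fintype V] {E : V → V → Prop} {A C : Set V} {n : ℕ}
    (hn : HasDisjointPaths E A C n) : n ≤ Fintype.card V := by
  obtain ⟨f, hf, hdisj⟩ := hn
  choose g hg using fun t => (hf t).2.2.2.1
  have hinj : Function.Injective (fun t => g t) := by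
    intro s t hst
    by_contra hne
    exact hdisj s t hne (g s) (List.mem_of_mem_head? ((hg s).2 ▸ rfl))
      (by simpa [hst] using List.mem_of_mem_head? (show g t ∈ (f t).head? from (hg t).2 ▸ rfl))
  simpa using Fintype.card_le_of_injective _ hinj

lemma menger_noedge [Fintype V] (E : V → V → Prop) (hE : ∀ x y, E x y → x = y)
    (A C : Set V) (k : ℕ) (hk : ∀ B, IsDisconnecting E A C B → k ≤ B.ncard) :
    HasDisjointPaths E A C k := by
  classical
  have hsing : ∀ p : List V, IsPathFrom E A C p → ∃ v, p = [v] ∧ v ∈ A ∧ v ∈ C := by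
    rintro p ⟨hne, hch, hnd, ⟨a, ha, hha⟩, ⟨c, hc, hlc⟩⟩
    match p with
    | [v] =>
      simp only [List.head?_cons, Option.some.injEq] at hha
      simp only [List.getLast?_singleton, Option.some.injEq] at hlc
      exact ⟨v, rfl, hha ▸ ha, hlc ▸ hc⟩
    | v :: w :: t =>
      have := (List.isChain_cons_cons.mp hch).1
      have hvw := hE v w this
      have : v ∉ w :: t := (List.nodup_cons.mp hnd).1
      exact absurd hvw (fun h => this (h ▸ List.mem_cons_self))
  have hAC : IsDisconnecting E A C (A ∩ C) := by
    intro p hp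
    obtain ⟨v, hpv, hvA, hvC⟩ := hsing p hp
    exact ⟨v, ⟨hvA, hvC⟩, by simp [hpv]⟩
  have hkle : k ≤ (A ∩ C).ncard := hk _ hAC
  apply hdp_mono_nat hkle
  -- build (A ∩ C).ncard disjoint singleton paths
  have hfin : (A ∩ C).Finite := Set.toFinite _
  have hcard : hfin.toFinset.card = (A ∩ C).ncard := by
    rw [Set.ncard_eq_toFinset_card (A ∩ C) hfin]
  let e := Finset.equivFinOfCardEq hcard
  refine ⟨fun t => [(e.symm t).1], fun t => ?_, fun s t hst v hvs hvt => ?_⟩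
  · have hmem : ((e.symm t) : V) ∈ A ∩ C := by
      have := (e.symm t).2
      rwa [Set.Finite.mem_toFinset] at this
    exact ⟨by simp, by simp [List.Chain'], by simp, ⟨_, hmem.1, by simp⟩, ⟨_, hmem.2, by simp⟩⟩
  · simp only [List.mem_singleton] at hvs hvt
    apply hst
    have : e.symm s = e.symm t := Subtype.ext (hvs ▸ hvt ▸ rfl)
    exact e.symm.injective this
lemma menger_aux [Fintype V] :
    ∀ (m : ℕ) (E : V → V → Prop), {e : V × V | e.1 ≠ e.2 ∧ E e.1 e.2}.ncard ≤ m →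
      ∀ (A C : Set V) (k : ℕ), (∀ B, IsDisconnecting E A C B → k ≤ B.ncard) →
        HasDisjointPaths E A C k := by
  intro m
  induction m with
  | zero =>
    intro E hE A C k hk
    refine menger_noedge E (fun a b hab => ?_) A C k hk
    by_contra hne
    have hmem : (a, b) ∈ {e : V × V | e.1 ≠ e.2 ∧ E e.1 e.2} := ⟨hne, hab⟩
    have := (Set.ncard_pos (Set.toFinite _)).mpr ⟨_, hmem⟩
    omega
  | succ m ih =>
    intro E hcard A C k hk
    classical
    by_cases hee : ∃ x y, x ≠ y ∧ E x y
    swap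
    · push_neg at hee
      exact menger_noedge E (fun a b hab => by by_contra h; exact hee a b h hab) A C k hk
    obtain ⟨x, y, hxy, hExy⟩ := hee
    set E' : V → V → Prop := fun u v => E u v ∧ ¬(u = x ∧ v = y) with hE'def
    have hE'E : ∀ a b, E' a b → E a b := fun a b h => h.1
    have hE'card : {e : V × V | e.1 ≠ e.2 ∧ E' e.1 e.2}.ncard ≤ m := by
      have hsub : {e : V × V | e.1 ≠ e.2 ∧ E' e.1 e.2} ⊆
          {e : V × V | e.1 ≠ e.2 ∧ E e.1 e.2} \ {(x, y)} := by
        rintro ⟨u, v⟩ ⟨h1, h2, h3⟩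
        refine ⟨⟨h1, h2⟩, ?_⟩
        simp only [Set.mem_singleton_iff, Prod.mk.injEq, not_and]
        intro hu hv
        exact absurd ⟨hu, hv⟩ h3
      have hmem : (x, y) ∈ {e : V × V | e.1 ≠ e.2 ∧ E e.1 e.2} := ⟨hxy, hExy⟩
      calc {e : V × V | e.1 ≠ e.2 ∧ E' e.1 e.2}.ncard
          ≤ ({e : V × V | e.1 ≠ e.2 ∧ E e.1 e.2} \ {(x, y)}).ncard :=
            Set.ncard_le_ncard hsub (Set.toFinite _)
        _ = {e : V × V | e.1 ≠ e.2 ∧ E e.1 e.2}.ncard - 1 :=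
            Set.ncard_diff_singleton_of_mem hmem
        _ ≤ (m + 1) - 1 := Nat.sub_le_sub_right hcard 1
        _ = m := rfl
    by_cases hS : ∀ B, IsDisconnecting E' A C B → k ≤ B.ncard
    · exact hdp_mono_rel hE'E (ih E' hE'card A C k hS)
    push_neg at hS
    obtain ⟨S, hSdis, hSlt⟩ := hS
    -- S ∪ {x} and S ∪ {y} disconnect A from C in E
    have hSx : IsDisconnecting E A C (S ∪ {x}) := by
      intro p hp
      by_cases hch' : p.Chain' E'
      · obtain ⟨v, hvS, hvp⟩ := hSdis p ⟨hp.1, hch', hp.2.2⟩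
        exact ⟨v, Or.inl hvS, hvp⟩
      · obtain ⟨l₁, l₂, hl⟩ := exists_split_edge p hp.2.1 hch'
        exact ⟨x, Or.inr rfl, by simp [hl]⟩
    have hSy : IsDisconnecting E A C (S ∪ {y}) := by
      intro p hp
      by_cases hch' : p.Chain' E'
      · obtain ⟨v, hvS, hvp⟩ := hSdis p ⟨hp.1, hch', hp.2.2⟩
        exact ⟨v, Or.inl hvS, hvp⟩
      · obtain ⟨l₁, l₂, hl⟩ := exists_split_edge p hp.2.1 hch'
        exact ⟨y, Or.inr rfl, by simp [hl]⟩
    have hxk : k ≤ (S ∪ {x}).ncard := hk _ hSx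
    have hyk : k ≤ (S ∪ {y}).ncard := hk _ hSy
    have hxS : x ∉ S := by
      intro hxS
      rw [Set.union_singleton, Set.insert_eq_self.mpr hxS] at hxk
      omega
    have hyS : y ∉ S := by
      intro hyS
      rw [Set.union_singleton, Set.insert_eq_self.mpr hyS] at hyk
      omega
    have hycard : (S ∪ {y}).ncard = k := by
      have h1 : (S ∪ {y}).ncard ≤ S.ncard + 1 := by
        rw [Set.union_singleton]; exact Set.ncard_insert_le _ _
      omega
    -- transfer lemmas
    have htransA : ∀ B, IsDisconnecting E' A (S ∪ {x}) B → IsDisconnecting E A C B := by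
      intro B hB p hp
      obtain ⟨hne, hch, hnd, hhead, hlast⟩ := hp
      by_cases hch' : p.Chain' E'
      · obtain ⟨s, hsS, hsp⟩ := hSdis p ⟨hne, hch', hnd, hhead, hlast⟩
        obtain ⟨p₁, h1, h2, h3, h4, ⟨w, hw1, hw2⟩, h6, h7⟩ :=
          truncate_first E' (S ∪ {x}) p hch' hnd ⟨s, hsp, Or.inl hsS⟩
        obtain ⟨u, huB, hup⟩ := hB p₁ ⟨h3, h1, h2, by rw [h4]; exact hhead, ⟨w, hw2, hw1⟩⟩
        exact ⟨u, huB, h7 u hup⟩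
      · obtain ⟨l₁, l₂, hl⟩ := exists_split_edge p hch hch'
        subst hl
        have hxl₁ : x ∉ l₁ := by
          intro hx
          exact (List.nodup_append'.mp hnd).2.2 hx List.mem_cons_self
        have hpre : (l₁ ++ [x]) <+: l₁ ++ x :: y :: l₂ := ⟨y :: l₂, by simp⟩
        have hch₁ : (l₁ ++ [x]).Chain' E' :=
          chain'_restrict _ (hch.prefix hpre) (by rw [List.dropLast_concat]; exact hxl₁)
        have hhead₁ : (l₁ ++ [x]).head? = (l₁ ++ x :: y :: l₂).head? := by
          cases l₁ <;> simp
        obtain ⟨u, huB, hup⟩ := hB (l₁ ++ [x])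
          ⟨by simp, hch₁, List.Nodup.sublist hpre.sublist hnd,
            by rw [hhead₁]; exact hhead, ⟨x, Or.inr rfl, List.getLast?_concat⟩⟩
        exact ⟨u, huB, hpre.sublist.subset hup⟩
    have htransC : ∀ B, IsDisconnecting E' (S ∪ {y}) C B → IsDisconnecting E A C B := by
      intro B hB p hp
      obtain ⟨hne, hch, hnd, hhead, hlast⟩ := hp
      by_cases hch' : p.Chain' E'
      · obtain ⟨s, hsS, hsp⟩ := hSdis p ⟨hne, hch', hnd, hhead, hlast⟩
        obtain ⟨q, h1, h2, h3, h4, ⟨w, hw1, hw2⟩, h6, h7⟩ :=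
          truncate_last E' (S ∪ {y}) p hch' hnd ⟨s, hsp, Or.inl hsS⟩
        obtain ⟨u, huB, hup⟩ := hB q ⟨h3, h1, h2, ⟨w, hw2, hw1⟩, by rw [h4]; exact hlast⟩
        exact ⟨u, huB, h7 u hup⟩
      · obtain ⟨l₁, l₂, hl⟩ := exists_split_edge p hch hch'
        subst hl
        have hsuf : (y :: l₂) <:+ l₁ ++ x :: y :: l₂ := ⟨l₁ ++ [x], by simp⟩
        have hxq : x ∉ y :: l₂ := by
          have hnd2 : (x :: y :: l₂).Nodup :=
            List.Nodup.sublist (List.suffix_append l₁ _).sublist hnd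
          exact (List.nodup_cons.mp hnd2).1
        have hchq : (y :: l₂).Chain' E' :=
          chain'_restrict _ (hch.suffix hsuf)
            (fun hc => hxq ((List.dropLast_sublist _).subset hc))
        have hlastq : (y :: l₂).getLast? = (l₁ ++ x :: y :: l₂).getLast? := by
          rw [List.getLast?_append_cons, getLast?_cons_ne_nil (by simp : (y :: l₂) ≠ [])]
        obtain ⟨u, huB, hup⟩ := hB (y :: l₂)
          ⟨by simp, hchq, List.Nodup.sublist hsuf.sublist hnd,
            ⟨y, Or.inr rfl, by simp⟩, by rw [hlastq]; exact hlast⟩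
        exact ⟨u, huB, hsuf.sublist.subset hup⟩
    have hA1 : HasDisjointPaths E' A (S ∪ {x}) k :=
      ih E' hE'card A (S ∪ {x}) k (fun B hB => hk B (htransA B hB))
    have hC1 : HasDisjointPaths E' (S ∪ {y}) C k :=
      ih E' hE'card (S ∪ {y}) C k (fun B hB => hk B (htransC B hB))
    -- truncate the A-side paths at their first vertex of S ∪ {x}
    obtain ⟨f₀, hf₀, hf₀disj⟩ := hA1
    have hftrunc : ∀ t, ∃ p : List V, p.Chain' E' ∧ p.Nodup ∧ p ≠ [] ∧
        p.head? = (f₀ t).head? ∧ (∃ w, p.getLast? = some w ∧ w ∈ S ∪ {x}) ∧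
        (∀ u ∈ p, u ∈ S ∪ {x} → some u = p.getLast?) ∧ (∀ v ∈ p, v ∈ f₀ t) := by
      intro t
      obtain ⟨c, hc, hlc⟩ := (hf₀ t).2.2.2.2
      exact truncate_first E' (S ∪ {x}) (f₀ t) (hf₀ t).2.1 (hf₀ t).2.2.1
        ⟨c, mem_of_getLast?' hlc, hc⟩
    choose f hfch hfnd hfne hfhead hfw hfonly hfsub using hftrunc
    choose glast hglast1 hglast2 using hfw
    have hfA : ∀ t, ∃ a ∈ A, (f t).head? = some a := by
      intro t; rw [hfhead t]; exact (hf₀ t).2.2.2.1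
    have hfdisj : ∀ s t, s ≠ t → ∀ v, v ∈ f s → v ∉ f t :=
      fun s t hst v hv hv' => hf₀disj s t hst v (hfsub s v hv) (hfsub t v hv')
    -- truncate the C-side paths at their last vertex of S ∪ {y}
    obtain ⟨g₀, hg₀, hg₀disj⟩ := hC1
    have hgtrunc : ∀ t, ∃ q : List V, q.Chain' E' ∧ q.Nodup ∧ q ≠ [] ∧
        q.getLast? = (g₀ t).getLast? ∧ (∃ w, q.head? = some w ∧ w ∈ S ∪ {y}) ∧
        (∀ u ∈ q, u ∈ S ∪ {y} → some u = q.head?) ∧ (∀ v ∈ q, v ∈ g₀ t) := by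
      intro t
      obtain ⟨a, ha, hha⟩ := (hg₀ t).2.2.2.1
      refine truncate_last E' (S ∪ {y}) (g₀ t) (hg₀ t).2.1 (hg₀ t).2.2.1
        ⟨a, List.mem_of_mem_head? (by rw [hha]; rfl), ha⟩
    choose g hgch hgnd hgne hglastC hgw hgonly hgsub using hgtrunc
    choose ghd hghd1 hghd2 using hgw
    have hgC : ∀ t, ∃ c ∈ C, (g t).getLast? = some c := by
      intro t; rw [hglastC t]; exact (hg₀ t).2.2.2.2
    have hgdisj : ∀ s t, s ≠ t → ∀ v, v ∈ g s → v ∉ g t :=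
      fun s t hst v hv hv' => hg₀disj s t hst v (hgsub s v hv) (hgsub t v hv')
    -- key disjointness lemma
    have key : ∀ s t v, v ∈ f s → v ∈ g t →
        v ∈ S ∧ some v = (f s).getLast? ∧ some v = (g t).head? := by
      intro s t v hvf hvg
      have hvS : v ∈ S := by
        by_contra hvS
        obtain ⟨u₁, u₂, hu⟩ := List.append_of_mem hvf
        obtain ⟨w₁, w₂, hw⟩ := List.append_of_mem hvg
        have hwch : (u₁ ++ v :: w₂).Chain' E' := by
          rw [show u₁ ++ v :: w₂ = (u₁ ++ [v]) ++ w₂ by simp]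
          simp only [List.Chain']; rw [List.isChain_append]
          refine ⟨(hfch s).prefix (hu ▸ ⟨u₂, by simp⟩),
            (hgch t).suffix (hw ▸ ⟨w₁ ++ [v], by simp⟩), ?_⟩
          intro a ha b hb
          rw [List.getLast?_concat] at ha
          have hvw₂ : (v :: w₂).Chain' E' := (hgch t).suffix (hw ▸ ⟨w₁, rfl⟩)
          have := (List.isChain_cons.mp hvw₂).1 b hb
          obtain rfl : v = a := by simpa using ha
          exact this
        have hwhead : (u₁ ++ v :: w₂).head? = (f s).head? := by
          rw [hu]; cases u₁ <;> simp
        have hwlast : (u₁ ++ v :: w₂).getLast? = (g t).getLast? := by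
          rw [hw, List.getLast?_append_cons, List.getLast?_append_cons]
        have hwS : ∀ u ∈ u₁ ++ v :: w₂, u ∉ S := by
          intro u hu' huS
          rcases List.mem_append.mp hu' with h | h
          · have hufs : u ∈ f s := hu ▸ List.mem_append.mpr (Or.inl h)
            have honly := hfonly s u hufs (Or.inl huS)
            have h2 : (f s).getLast? = (v :: u₂).getLast? := by
              rw [hu, List.getLast?_append_cons]
            have humem : u ∈ v :: u₂ := mem_of_getLast?' (by rw [← h2, ← honly])
            exact (List.nodup_append'.mp (hu ▸ (hfnd s))).2.2 h humem
          · rcases List.mem_cons.mp h with h | h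
            · exact hvS (h ▸ huS)
            · have hugt : u ∈ g t := hw ▸ List.mem_append.mpr (Or.inr (by simp [h]))
              have honly := hgonly t u hugt (Or.inl huS)
              cases w₁ with
              | nil =>
                have hue : u = v := by
                  have : (g t).head? = some v := by rw [hw]; rfl
                  rw [this] at honly; simpa using honly
                have hnd3 : (v :: w₂).Nodup := by
                  have := hw ▸ hgnd t; simpa using this
                exact (List.nodup_cons.mp hnd3).1 (hue ▸ h)
              | cons b bs =>
                have hue : u = b := by
                  have : (g t).head? = some b := by rw [hw]; rfl
                  rw [this] at honly; simpa using honly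
                have hnd3 : (b :: (bs ++ v :: w₂)).Nodup := by
                  have := hw ▸ hgnd t; simpa using this
                exact (List.nodup_cons.mp hnd3).1
                  (List.mem_append.mpr (Or.inr (List.mem_cons_of_mem v (hue ▸ h))))
        obtain ⟨p, hp1, hp2, hp3, hp4, hp5⟩ :=
          walk_to_path E' (u₁ ++ v :: w₂).length (u₁ ++ v :: w₂) le_rfl hwch
        have hheadA : ∃ a ∈ A, p.head? = some a := by
          rw [hp3, hwhead]; exact hfA s
        have hlastC : ∃ c ∈ C, p.getLast? = some c := by
          rw [hp4, hwlast]; exact hgC t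
        have hpne : p ≠ [] := by
          obtain ⟨a, _, h⟩ := hheadA
          intro hc; rw [hc] at h; simp at h
        obtain ⟨z, hzS, hzp⟩ := hSdis p ⟨hpne, hp1, hp2, hheadA, hlastC⟩
        exact hwS z (hp5 z hzp) hzS
      exact ⟨hvS, hfonly s v hvf (Or.inl hvS), hgonly t v hvg (Or.inl hvS)⟩
    -- glast is injective
    have hglast_mem : ∀ t, glast t ∈ f t := fun t => mem_of_getLast?' (hglast1 t)
    have hglast_inj : Function.Injective glast := by
      intro s t hst
      by_contra hne
      exact hfdisj s t hne (glast s) (hglast_mem s) (hst ▸ hglast_mem t)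
    -- heads of g form a bijection onto S ∪ {y}
    haveI : Fintype ↥(S ∪ {y} : Set V) := Fintype.ofFinite _
    have hcardSy : Fintype.card ↥(S ∪ {y} : Set V) = k := by
      rw [← Set.toFinset_card, ← Set.ncard_eq_toFinset_card']; exact hycard
    have hghd_mem : ∀ t, ghd t ∈ g t :=
      fun t => List.mem_of_mem_head? (by rw [hghd1 t]; rfl)
    have hdbij : Function.Bijective (fun t => (⟨ghd t, hghd2 t⟩ : ↥(S ∪ {y} : Set V))) := by
      rw [Fintype.bijective_iff_injective_and_card]
      refine ⟨?_, by rw [hcardSy]; simp⟩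
      intro s t hst
      by_contra hne
      have heq : ghd s = ghd t := congrArg Subtype.val hst
      exact hgdisj s t hne (ghd s) (hghd_mem s) (heq ▸ hghd_mem t)
    set σ := Equiv.ofBijective _ hdbij with hσdef
    set tgt : Fin k → ↥(S ∪ {y} : Set V) := fun t =>
      if h : glast t = x then ⟨y, Or.inr rfl⟩
      else ⟨glast t, by
        rcases hglast2 t with h' | h'
        · exact Or.inl h'
        · exact absurd h' h⟩ with htgtdef
    set π : Fin k → Fin k := fun t => σ.symm (tgt t) with hπdef
    have hπ : ∀ t, ghd (π t) = (tgt t).1 :=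
      fun t => congrArg Subtype.val (σ.apply_symm_apply (tgt t))
    have hπx : ∀ t, glast t = x → ghd (π t) = y := by
      intro t h; rw [hπ t, htgtdef]; simp [h]
    have hπnx : ∀ t, glast t ≠ x → ghd (π t) = glast t := by
      intro t h; rw [hπ t, htgtdef]; simp [h]
    have hπinj : Function.Injective π := by
      intro s t hst
      have h1 : tgt s = tgt t := by
        calc tgt s = σ (σ.symm (tgt s)) := (σ.apply_symm_apply _).symm
          _ = σ (σ.symm (tgt t)) := congrArg σ hst
          _ = tgt t := σ.apply_symm_apply _
      have h2 : (tgt s).1 = (tgt t).1 := congrArg Subtype.val h1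
      by_cases hs : glast s = x <;> by_cases ht' : glast t = x
      · exact hglast_inj (hs.trans ht'.symm)
      · exfalso
        rw [htgtdef] at h2; simp [hs, ht'] at h2
        rcases hglast2 t with h' | h'
        · exact hyS (h2 ▸ h')
        · exact ht' h'
      · exfalso
        rw [htgtdef] at h2; simp [hs, ht'] at h2
        rcases hglast2 s with h' | h'
        · exact hyS (h2 ▸ h')
        · exact hs h'
      · rw [htgtdef] at h2; simp [hs, ht'] at h2
        exact hglast_inj h2
    -- the glued paths
    have hGsub : ∀ t : Fin k, ∀ u ∈ (if glast t = x then g (π t) else (g (π t)).tail),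
        u ∈ g (π t) := by
      intro t u hu
      by_cases h : glast t = x
      · rwa [if_pos h] at hu
      · rw [if_neg h] at hu; exact (List.tail_sublist _).subset hu
    have hgcons : ∀ t, g t = ghd t :: (g t).tail := fun t => cons_head_tail' (hghd1 t)
    have hcross : ∀ s t : Fin k, ∀ v, v ∈ f s →
        v ∈ (if glast t = x then g (π t) else (g (π t)).tail) → False := by
      intro s t v hvf hvG
      have hvg : v ∈ g (π t) := hGsub t v hvG
      obtain ⟨hvS, hvlast, hvhead⟩ := key s (π t) v hvf hvg
      by_cases h : glast t = x
      · have : v = y := by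
          rw [hghd1 (π t), hπx t h] at hvhead
          simpa using hvhead
        exact hyS (this ▸ hvS)
      · rw [if_neg h] at hvG
        have hveq : v = ghd (π t) := by
          rw [hghd1 (π t)] at hvhead; simpa using hvhead
        have hnd2 : (ghd (π t) :: (g (π t)).tail).Nodup := by
          rw [← hgcons (π t)]; exact hgnd (π t)
        exact (List.nodup_cons.mp hnd2).1 (hveq ▸ hvG)
    refine ⟨fun t => f t ++ (if glast t = x then g (π t) else (g (π t)).tail),
      fun t => ?_, fun s t hst v hvs hvt => ?_⟩
    · show IsPathFrom E A C (f t ++ (if glast t = x then g (π t) else (g (π t)).tail))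
      by_cases h : glast t = x
      · rw [if_pos h]
        refine ⟨by simp [hfne t], ?_, ?_, ?_, ?_⟩
        · simp only [List.Chain']; rw [List.isChain_append]
          refine ⟨(hfch t).imp hE'E, (hgch (π t)).imp hE'E, ?_⟩
          intro a ha b hb
          rw [hglast1 t] at ha
          obtain rfl : glast t = a := by simpa using ha
          rw [hghd1 (π t)] at hb
          obtain rfl : ghd (π t) = b := by simpa using hb
          rw [hπx t h, h]
          exact hExy
        · exact List.Nodup.append (hfnd t) (hgnd (π t))
            (fun u hu hu' => hcross t t u hu (by rw [if_pos h]; exact hu'))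
        · obtain ⟨a, ha, hha⟩ := hfA t
          exact ⟨a, ha, by rw [List.head?_append, hha]; rfl⟩
        · rw [List.getLast?_append_of_ne_nil _ (hgne (π t))]
          exact hgC (π t)
      · rw [if_neg h]
        refine ⟨by simp [hfne t], ?_, ?_, ?_, ?_⟩
        · simp only [List.Chain']; rw [List.isChain_append]
          refine ⟨(hfch t).imp hE'E, ((hgch (π t)).tail).imp hE'E, ?_⟩
          intro a ha b hb
          rw [hglast1 t] at ha
          obtain rfl : glast t = a := by simpa using ha
          have hch2 : (ghd (π t) :: (g (π t)).tail).Chain' E' := by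
            rw [← hgcons (π t)]; exact hgch (π t)
          have := (List.isChain_cons.mp hch2).1 b hb
          rw [hπnx t h] at this
          exact hE'E _ _ this
        · exact List.Nodup.append (hfnd t)
            (List.Nodup.sublist (List.tail_sublist _) (hgnd (π t)))
            (fun u hu hu' => hcross t t u hu (by rw [if_neg h]; exact hu'))
        · obtain ⟨a, ha, hha⟩ := hfA t
          exact ⟨a, ha, by rw [List.head?_append, hha]; rfl⟩
        · by_cases htl : (g (π t)).tail = []
          · have hg1 : g (π t) = [ghd (π t)] := by rw [hgcons (π t), htl]
            obtain ⟨c, hc, hlc⟩ := hgC (π t)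
            have hce : c = ghd (π t) := by rw [hg1] at hlc; simpa using hlc.symm
            refine ⟨glast t, ?_, ?_⟩
            · rw [← hπnx t h, ← hce]; exact hc
            · rw [htl, List.append_nil, hglast1 t]
          · rw [List.getLast?_append_of_ne_nil _ htl]
            have heq : (g (π t)).tail.getLast? = (g (π t)).getLast? := by
              conv_rhs => rw [hgcons (π t)]
              rw [getLast?_cons_ne_nil htl]
            rw [heq]
            exact hgC (π t)
    · -- pairwise disjoint
      have hvs' : v ∈ f s ++ (if glast s = x then g (π s) else (g (π s)).tail) := hvs
      have hvt' : v ∈ f t ++ (if glast t = x then g (π t) else (g (π t)).tail) := hvt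
      rcases List.mem_append.mp hvs' with hs1 | hs1 <;>
        rcases List.mem_append.mp hvt' with ht1 | ht1
      · exact hfdisj s t hst v hs1 ht1
      · exact hcross s t v hs1 ht1
      · exact hcross t s v ht1 hs1
      · exact hgdisj (π s) (π t) (fun hpq => hst (hπinj hpq)) v
          (hGsub s v hs1) (hGsub t v ht1)

end MengerAux

/-- Directed vertex version of Menger's theorem: the maximum number of mutually
vertex-disjoint directed paths from `A` to `C` equals the minimum cardinality of an
`A`–`C` disconnecting set (which may intersect `A` and `C`). -/
theorem stmt_1 {V : Type*} [Fintype V] (E : V → V → Prop) (A C : Set V) :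
    maxDisjointPaths E A C =
      sInf {n | ∃ B : Set V, IsDisconnecting E A C B ∧ B.ncard = n} := by
  classical
  set T := {n | ∃ B : Set V, IsDisconnecting E A C B ∧ B.ncard = n} with hT
  have hTne : T.Nonempty := by
    refine ⟨(Set.univ : Set V).ncard, Set.univ, fun p hp => ?_, rfl⟩
    obtain ⟨a, _, hha⟩ := hp.2.2.2.1
    exact ⟨a, trivial, List.mem_of_mem_head? (by rw [hha]; rfl)⟩
  obtain ⟨B₀, hB₀, hB₀card⟩ := Nat.sInf_mem hTne
  have hmax : HasDisjointPaths E A C (sInf T) := by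
    refine MengerAux.menger_aux {e : V × V | e.1 ≠ e.2 ∧ E e.1 e.2}.ncard E le_rfl A C _ ?_
    intro B hB
    exact Nat.sInf_le ⟨B, hB, rfl⟩
  apply _root_.le_antisymm
  · apply csSup_le
    · exact ⟨0, Fin.elim0, fun t => t.elim0, fun s => s.elim0⟩
    · intro n hn
      rw [← hB₀card]
      exact MengerAux.count_le hB₀ hn
  · exact le_csSup ⟨Fintype.card V, fun n hn => MengerAux.bdd hn⟩ hmax
end

section
/- Let T = (I − G)^{-1} where G ∈ F^{L×L} and I − G is invertible, and let {P, B, S} partition the index set such that G_{PS} = 0 (no entries from columns S to rows P). If additionally I − G_{PP} is invertible, then the rank of the submatrix of T with rows in P ∪ B and columns in B ∪ S is at most |B|. -/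
/-- Let `{P, B, S}` partition the index set, let `G` satisfy `G_{PS} = 0`, let `I - G` and
the principal submatrix `I - G_{PP}` be invertible, and let `T = (I - G)⁻¹`. Then the rank
of the submatrix of `T` with rows in `P ∪ B` and columns in `B ∪ S` is at most `|B|`. -/
theorem stmt_10 {V : Type*} [Fintype V] [DecidableEq V] {F : Type*} [Field F]
    (G : Matrix V V F) (P B S : Finset V)
    (hPB : Disjoint P B) (hPS : Disjoint P S) (hBS : Disjoint B S)
    (hcover : P ∪ B ∪ S = Finset.univ)
    (hPS0 : ∀ i ∈ P, ∀ j ∈ S, G i j = 0)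
    (hG : IsUnit (1 - G))
    (hPP : IsUnit (1 - G.submatrix
      (fun x : {v : V // v ∈ P} => (x : V)) (fun x : {v : V // v ∈ P} => (x : V)))) :
    Matrix.rank (((1 - G)⁻¹).submatrix
      (fun x : {v : V // v ∈ P ∪ B} => (x : V))
      (fun x : {v : V // v ∈ B ∪ S} => (x : V))) ≤ B.card := by
  classical
  set T : Matrix V V F := (1 - G)⁻¹ with hT
  have hdet : IsUnit (1 - G).det := (Matrix.isUnit_iff_isUnit_det _).mp hG
  have hinv : (1 - G) * T = 1 := Matrix.mul_nonsing_inv _ hdet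
  -- core identity
  have key : ∀ i ∈ P, ∀ j ∈ B ∪ S,
      T i j - (∑ k ∈ P, G i k * T k j) = ∑ k ∈ B, G i k * T k j := by
    intro i hi j hj
    have hij : i ≠ j := by
      rintro rfl
      rcases Finset.mem_union.mp hj with h | h
      · exact (Finset.disjoint_left.mp hPB hi) h
      · exact (Finset.disjoint_left.mp hPS hi) h
    have h0 : ∑ k, (1 - G) i k * T k j = (0 : F) := by
      have := congrFun (congrFun hinv i) j
      rw [Matrix.mul_apply] at this
      rw [this, Matrix.one_apply_ne hij]
    have h1 : ∑ k, (1 - G) i k * T k j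
        = T i j - ∑ k, G i k * T k j := by
      simp [Matrix.sub_apply, sub_mul, Finset.sum_sub_distrib,
        Matrix.one_apply, Finset.sum_ite_eq]
    have h2 : T i j = ∑ k, G i k * T k j :=
      sub_eq_zero.mp (h1.symm.trans h0)
    have hsplit : ∑ k, G i k * T k j
        = (∑ k ∈ P, G i k * T k j) + (∑ k ∈ B, G i k * T k j)
          + ∑ k ∈ S, G i k * T k j := by
      rw [← hcover, Finset.sum_union (by
        rw [Finset.disjoint_union_left]; exact ⟨hPS, hBS⟩),
        Finset.sum_union hPB]
    have hS : ∑ k ∈ S, G i k * T k j = 0 :=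
      Finset.sum_eq_zero fun k hk => by rw [hPS0 i hi k hk, zero_mul]
    rw [h2, hsplit, hS, add_zero]
    ring
  set cP : {v : V // v ∈ P} → V := fun x => (x : V)
  set Gpp : Matrix {v : V // v ∈ P} {v : V // v ∈ P} F := G.submatrix cP cP with hGpp
  set Gpb : Matrix {v : V // v ∈ P} {v : V // v ∈ B} F :=
    G.submatrix cP (fun x => (x : V)) with hGpb
  set Tp : Matrix {v : V // v ∈ P} {v : V // v ∈ B ∪ S} F :=
    T.submatrix cP (fun x => (x : V)) with hTp
  set Tb : Matrix {v : V // v ∈ B} {v : V // v ∈ B ∪ S} F :=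
    T.submatrix (fun x => (x : V)) (fun x => (x : V)) with hTb
  have hM : (1 - Gpp) * Tp = Gpb * Tb := by
    ext i j
    rw [Matrix.mul_apply, Matrix.mul_apply]
    have e1 : ∑ k : {v : V // v ∈ P}, (1 - Gpp) i k * Tp k j
        = Tp i j - ∑ k : {v : V // v ∈ P}, Gpp i k * Tp k j := by
      simp [Matrix.sub_apply, sub_mul, Finset.sum_sub_distrib,
        Matrix.one_apply, Finset.sum_ite_eq]
    rw [e1]
    have e2 : ∑ k : {v : V // v ∈ P}, Gpp i k * Tp k j
        = ∑ k ∈ P, G (i : V) k * T k (j : V) :=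
      Finset.sum_coe_sort P (fun k => G (i : V) k * T k (j : V))
    have e3 : ∑ k : {v : V // v ∈ B}, Gpb i k * Tb k j
        = ∑ k ∈ B, G (i : V) k * T k (j : V) :=
      Finset.sum_coe_sort B (fun k => G (i : V) k * T k (j : V))
    rw [e2, e3]
    exact key i.1 i.2 j.1 j.2
  have hdetP : IsUnit (1 - Gpp).det := (Matrix.isUnit_iff_isUnit_det _).mp hPP
  have hTpEq : Tp = (1 - Gpp)⁻¹ * (Gpb * Tb) := by
    rw [← hM, ← Matrix.mul_assoc, Matrix.nonsing_inv_mul _ hdetP, Matrix.one_mul]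
  -- build factorization of the full submatrix
  set X : Matrix {v : V // v ∈ P ∪ B} {v : V // v ∈ B} F := fun i k =>
    if h : (i : V) ∈ P then ((1 - Gpp)⁻¹ * Gpb) ⟨i, h⟩ k
    else if (i : V) = (k : V) then 1 else 0 with hX
  have hfac : T.submatrix
      (fun x : {v : V // v ∈ P ∪ B} => (x : V))
      (fun x : {v : V // v ∈ B ∪ S} => (x : V)) = X * Tb := by
    ext i j
    rw [Matrix.mul_apply]
    by_cases h : (i : V) ∈ P
    · have : T (i : V) (j : V) = Tp ⟨i, h⟩ j := rfl
      rw [Matrix.submatrix_apply, this, hTpEq, ← Matrix.mul_assoc,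
        Matrix.mul_apply]
      refine Finset.sum_congr rfl fun k _ => ?_
      simp [hX, h]
    · have hB : (i : V) ∈ B := by
        rcases Finset.mem_union.mp i.2 with h' | h'
        · exact absurd h' h
        · exact h'
      rw [Finset.sum_eq_single (⟨(i : V), hB⟩ : {v : V // v ∈ B})]
      · simp only [hX, dif_neg h, if_pos rfl, if_true, one_mul]
        rfl
      · intro k _ hk
        have : (i : V) ≠ (k : V) := fun he => hk (by ext; exact he.symm)
        simp [hX, h, this]
      · intro hk; exact absurd (Finset.mem_univ _) hk
  rw [hfac]
  calc (X * Tb).rank ≤ Tb.rank := Matrix.rank_mul_le_right X Tb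
    _ ≤ Fintype.card {v : V // v ∈ B} := Tb.rank_le_card_height
    _ = B.card := Fintype.card_coe B
end

section
/- Let j be a measured node in a finite directed graph and let i be a node with a directed path P to j such that every directed walk from i to j has P as a prefix. Then for every node k on P (other than j) with successor ℓ on P, ℓ is the unique out-neighbor of k from which there exists a directed path to j. -/
private lemma last_aux {V : Type*} (l1 : List V) (a : V) (t : List V) :
    (l1 ++ a :: t).getLast? = (a :: t).getLast? := by
  obtain ⟨x, hx⟩ := Option.isSome_iff_exists.mp
    (List.getLast?_isSome.mpr (List.cons_ne_nil a t))
  rw [List.getLast?_append, hx]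
  rfl

/-- Let `P` be a directed path from `i` to the measured node `j` such that every directed
walk from `i` to `j` has `P` as a prefix. Then for every node `k` on `P` (other than `j`)
with successor `ℓ` on `P`, `ℓ` is the unique out-neighbor of `k` from which there is a
directed path to `j`. -/
theorem stmt_16 {V : Type*} (E : V → V → Prop) (i j : V) (P : List V)
    (hne : P ≠ []) (hchain : P.Chain' E) (hnodup : P.Nodup)
    (hhead : P.head? = some i) (hlast : P.getLast? = some j)
    (hprefix : ∀ W : List V, W ≠ [] → W.Chain' E → W.head? = some i →
      W.getLast? = some j → P <+: W) :
    ∀ k ℓ l1 l2, P = l1 ++ k :: ℓ :: l2 →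
      E k ℓ ∧
      (∃ q : List V, q ≠ [] ∧ q.Chain' E ∧ q.Nodup ∧
        q.head? = some ℓ ∧ q.getLast? = some j) ∧
      (∀ ℓ', E k ℓ' →
        (∃ q : List V, q ≠ [] ∧ q.Chain' E ∧ q.Nodup ∧
          q.head? = some ℓ' ∧ q.getLast? = some j) → ℓ' = ℓ) := by
  intro k ℓ l1 l2 hP
  subst hP
  unfold List.Chain' at hchain
  rw [List.isChain_append] at hchain
  obtain ⟨hc1, hc2, hlink⟩ := hchain
  have hEkl : E k ℓ := (List.isChain_cons_cons.mp hc2).1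
  rw [last_aux, List.getLast?_cons_cons] at hlast
  refine ⟨hEkl, ⟨ℓ :: l2, by simp, (List.isChain_cons_cons.mp hc2).2,
    (hnodup.of_append_right).of_cons, rfl, hlast⟩, ?_⟩
  rintro ℓ' hE ⟨q, hqne, hqc, -, hqh, hql⟩
  obtain ⟨a, q', rfl⟩ := List.exists_cons_of_ne_nil hqne
  simp only [List.head?_cons, Option.some.injEq] at hqh
  have hWc : (l1 ++ k :: a :: q').Chain' E := by
    unfold List.Chain'
    rw [List.isChain_append]
    refine ⟨hc1, List.isChain_cons_cons.mpr ⟨hqh ▸ hE, hqc⟩, by simpa using hlink⟩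
  have hWh : (l1 ++ k :: a :: q').head? = some i := by
    cases l1 with
    | nil => simpa using hhead
    | cons b l => simpa using hhead
  have hWl : (l1 ++ k :: a :: q').getLast? = some j := by
    rw [last_aux]; exact hql
  have hpre := hprefix _ (by simp) hWc hWh hWl
  rw [List.prefix_append_right_inj] at hpre
  obtain ⟨-, hpre⟩ := List.cons_prefix_cons.mp hpre
  rw [← hqh]; exact (List.cons_prefix_cons.mp hpre).1.symm
end

section
/- Let G be a finite weakly connected directed graph on L vertices. Let k be a vertex of maximum out-degree and let C = V \ {k}. Then for every vertex i, there exist d_i⁺ mutually vertex-disjoint directed paths from the out-neighbors of i to C, where d_i⁺ is the out-degree of i. (Paths of length zero from a vertex of C to itself are allowed.) -/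
/-- In a weakly connected directed graph (no self-loops), if `k` is a vertex of maximum
out-degree and `C = V \ {k}` is measured, then for every vertex `i` there exist `d_i⁺`
mutually vertex-disjoint directed paths from the out-neighbors of `i` to `C`. -/
theorem stmt_17 {V : Type*} [Fintype V] [DecidableEq V]
    (E : V → V → Prop) [DecidableRel E]
    (hirr : ∀ v, ¬ E v v)
    (hconn : ∀ S : Set V, S.Nonempty → Sᶜ.Nonempty →
      ∃ u v, u ∈ S ∧ v ∉ S ∧ (E u v ∨ E v u))
    (k : V)
    (hk : ∀ v, (Finset.univ.filter (fun w => E v w)).card ≤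
      (Finset.univ.filter (fun w => E k w)).card)
    (i : V) :
    HasDisjointPaths E {v | E i v} {v | v ≠ k}
      (Finset.univ.filter (fun w => E i w)).card := by
  classical
  set A := Finset.univ.filter (fun w => E i w) with hA
  have hmem : ∀ a, a ∈ A ↔ E i a := by intro a; simp [hA]
  have einj : ∀ s t : Fin A.card, s ≠ t →
      (A.equivFin.symm s : V) ≠ (A.equivFin.symm t : V) := by
    intro s t hst h
    exact hst (A.equivFin.symm.injective (Subtype.ext h))
  by_cases hkA : k ∈ A
  · have hj : ∃ j, E k j ∧ ¬ E i j := by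
      by_contra h
      push_neg at h
      have hsub : Finset.univ.filter (fun w => E k w) ⊆ A.erase k := by
        intro x hx
        simp only [Finset.mem_filter, Finset.mem_univ, true_and] at hx
        refine Finset.mem_erase.mpr ⟨?_, (hmem x).mpr (h x hx)⟩
        rintro rfl; exact hirr _ hx
      have h1 := Finset.card_le_card hsub
      have h2 : (A.erase k).card < A.card := Finset.card_erase_lt_of_mem hkA
      have h3 := hk i
      rw [← hA] at h3
      omega
    obtain ⟨j, hkj, hij⟩ := hj
    have hjk : j ≠ k := by rintro rfl; exact hirr _ hkj
    refine ⟨fun t => if ((A.equivFin.symm t : V) = k) then [k, j]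
      else [(A.equivFin.symm t : V)], ?_, ?_⟩
    · intro t
      by_cases h : (A.equivFin.symm t : V) = k
      · simp only [h, if_true]
        exact ⟨by simp, List.isChain_pair.mpr hkj, by simp [Ne.symm hjk],
          ⟨k, (hmem k).mp hkA, rfl⟩, ⟨j, hjk, rfl⟩⟩
      · simp only [h, if_false]
        exact ⟨by simp, List.isChain_singleton _, by simp,
          ⟨_, (hmem _).mp (A.equivFin.symm t).2, rfl⟩, ⟨_, h, rfl⟩⟩
    · intro s t hst v hvs hvt
      have hne := einj s t hst
      have hjA : ∀ u : Fin A.card, (A.equivFin.symm u : V) ≠ j := by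
        intro u h
        exact hij (h ▸ (hmem _).mp (A.equivFin.symm u).2)
      by_cases hs : (A.equivFin.symm s : V) = k <;>
        by_cases ht : (A.equivFin.symm t : V) = k <;>
        simp only [hs, ht, if_true, if_false, List.mem_cons,
          List.mem_singleton, List.not_mem_nil, or_false] at hvs hvt
      · exact hne (hs.trans ht.symm)
      · rcases hvs with rfl | rfl
        · exact ht (hvt ▸ rfl)
        · exact hjA t hvt.symm
      · rcases hvt with rfl | rfl
        · exact hs (hvs ▸ rfl)
        · exact hjA s hvs.symm
      · exact hne (hvs ▸ hvt ▸ rfl)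
  · refine ⟨fun t => [(A.equivFin.symm t : V)], ?_, ?_⟩
    · intro t
      refine ⟨by simp, List.isChain_singleton _, by simp,
        ⟨_, (hmem _).mp (A.equivFin.symm t).2, rfl⟩, ⟨_, ?_, rfl⟩⟩
      intro h
      exact hkA (h ▸ (A.equivFin.symm t).2)
    · intro s t hst v hvs hvt
      simp only [List.mem_singleton] at hvs hvt
      exact einj s t hst (hvs ▸ hvt ▸ rfl)
end

section
/- Consider a directed cycle on nodes 1,…,η (edge from i to i+1 for i < η and from η to 1) with nonzero edge transfer functions G_{i+1,i} (i=1,…,η−1) and G_{1,η} over the field of rational functions, and let Δ = 1 − G_{1,η}·∏_{i=1}^{η−1} G_{i+1,i} ≠ 0. Then the last row of T = (I − G)^{-1} satisfies T_{η,η} = 1/Δ and T_{η,j} = (1/Δ)·G_{η,η−1}···G_{j+1,j} for j < η; consequently G_{j+1,j} = T_{η,j}/T_{η,j+1} for j = 1,…,η−1 and G_{1,η} = (1 − 1/T_{η,η}) / ∏_{i=1}^{η−1} G_{i+1,i}, so all edge functions are determined by the last row of T. -/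
/-- A directed cycle on the `n + 1` nodes `0, …, n` (edge `t → t+1` with nonzero transfer
function `g t` for `t < n`, and edge `n → 0` with nonzero transfer function `h`), with
`Δ = 1 - h·∏ g t ≠ 0`. Then the last row of `T = (I - G)⁻¹` satisfies
`T_{n,n} = 1/Δ` and `T_{n,j} = (1/Δ)·g_{n-1}⋯g_j` for `j < n`; consequently
`g j = T_{n,j} / T_{n,j+1}` and `h = (1 - 1/T_{n,n}) / ∏ g t`, so all edge transfer
functions are determined by the last row of `T`. -/
theorem stmt_18 {F : Type*} [Field F] (n : ℕ) (hn : 1 ≤ n)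
    (g : Fin n → F) (h : F) (hg : ∀ t, g t ≠ 0) (hh : h ≠ 0)
    (G : Matrix (Fin (n + 1)) (Fin (n + 1)) F)
    (hGg : ∀ t : Fin n, G t.succ t.castSucc = g t)
    (hGh : G 0 (Fin.last n) = h)
    (hG0 : ∀ i j, (∀ t : Fin n, ¬(i = t.succ ∧ j = t.castSucc)) →
      ¬(i = 0 ∧ j = Fin.last n) → G i j = 0)
    (Δ : F) (hΔdef : Δ = 1 - h * ∏ t, g t) (hΔ : Δ ≠ 0) :
    (1 - G)⁻¹ (Fin.last n) (Fin.last n) = Δ⁻¹ ∧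
    (∀ j : Fin n, (1 - G)⁻¹ (Fin.last n) j.castSucc
        = Δ⁻¹ * ∏ t ∈ Finset.univ.filter (fun t => j ≤ t), g t) ∧
    (∀ j : Fin n,
        g j = (1 - G)⁻¹ (Fin.last n) j.castSucc / (1 - G)⁻¹ (Fin.last n) j.succ) ∧
    h = (1 - 1 / (1 - G)⁻¹ (Fin.last n) (Fin.last n)) / ∏ t, g t := by
  classical
  set T : Matrix (Fin (n + 1)) (Fin (n + 1)) F := fun i j =>
    Δ⁻¹ * (if (j : ℕ) ≤ (i : ℕ) then
        ∏ t ∈ Finset.univ.filter (fun t : Fin n => (j : ℕ) ≤ (t : ℕ) ∧ (t : ℕ) < (i : ℕ)), g t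
      else h * ∏ t ∈ Finset.univ.filter
          (fun t : Fin n => (j : ℕ) ≤ (t : ℕ) ∨ (t : ℕ) < (i : ℕ)), g t)
    with hTdef
  have hGrow : ∀ (t : Fin n) (j), G t.succ j = if j = t.castSucc then g t else 0 := by
    intro t j
    split_ifs with hj
    · subst hj; exact hGg t
    · refine hG0 _ _ ?_ ?_
      · rintro s ⟨hs1, hs2⟩
        have hts : t = s := Fin.succ_inj.mp hs1
        subst hts
        exact hj hs2
      · rintro ⟨h1, -⟩
        exact Fin.succ_ne_zero t h1
  have hGzero : ∀ j, G 0 j = if j = Fin.last n then h else 0 := by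
    intro j
    split_ifs with hj
    · subst hj; exact hGh
    · refine hG0 _ _ ?_ ?_
      · rintro s ⟨hs1, -⟩; exact Fin.succ_ne_zero s hs1.symm
      · rintro ⟨-, h2⟩; exact hj h2
  have hTdiag : ∀ i, T i i = Δ⁻¹ := by
    intro i
    have : Finset.univ.filter (fun t : Fin n => (i : ℕ) ≤ (t : ℕ) ∧ (t : ℕ) < (i : ℕ)) = ∅ := by
      rw [Finset.filter_eq_empty_iff]; intro t _; omega
    simp [hTdef, this]
  have hTlast : ∀ k : Fin (n + 1), T (Fin.last n) k
      = Δ⁻¹ * ∏ t ∈ Finset.univ.filter (fun t : Fin n => (k : ℕ) ≤ (t : ℕ)), g t := by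
    intro k
    have hk : (k : ℕ) ≤ n := Fin.is_le k
    have hfil : Finset.univ.filter (fun t : Fin n => (k : ℕ) ≤ (t : ℕ) ∧ (t : ℕ) < n)
        = Finset.univ.filter (fun t : Fin n => (k : ℕ) ≤ (t : ℕ)) := by
      ext t
      have ht := t.isLt
      simp only [Finset.mem_filter, Finset.mem_univ, true_and]
      omega
    simp only [hTdef, Fin.val_last, if_pos hk, hfil]
  have key : (1 - G) * T = 1 := by
    ext i k
    rw [Matrix.sub_mul, Matrix.one_mul, Matrix.sub_apply, Matrix.one_apply]
    induction i using Fin.cases with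
    | zero =>
      have hmul : (G * T) 0 k = h * T (Fin.last n) k := by
        rw [Matrix.mul_apply, Finset.sum_eq_single (Fin.last n)]
        · simp [hGzero]
        · intro b _ hb; simp [hGzero, hb]
        · simp
      rw [hmul, hTlast]
      by_cases hk : k = 0
      · subst hk
        have h1 : T 0 0 = Δ⁻¹ := hTdiag 0
        have hfil : Finset.univ.filter (fun t : Fin n => (((0 : Fin (n+1))) : ℕ) ≤ (t : ℕ))
            = Finset.univ := by
          ext t; simp
        have h3 : Δ⁻¹ * Δ = 1 := inv_mul_cancel₀ hΔ
        rw [h1, hfil, if_pos rfl, ← h3, hΔdef]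
        ring
      · rw [if_neg (by simpa [eq_comm] using hk)]
        have hk' : 1 ≤ (k : ℕ) := by
          rcases Nat.eq_zero_or_pos (k : ℕ) with h0 | h0
          · exact absurd (Fin.ext h0) hk
          · exact h0
        have hT0k : T 0 k = Δ⁻¹ * (h * ∏ t ∈ Finset.univ.filter
            (fun t : Fin n => (k : ℕ) ≤ (t : ℕ)), g t) := by
          have hfil : Finset.univ.filter (fun t : Fin n => (k : ℕ) ≤ (t : ℕ) ∨ (t : ℕ) < 0)
              = Finset.univ.filter (fun t : Fin n => (k : ℕ) ≤ (t : ℕ)) := by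
            ext t; simp
          simp only [hTdef, Fin.val_zero, if_neg (by omega : ¬ (k : ℕ) ≤ 0), hfil]
          simp [show (k : ℕ) ≠ 0 by omega]
        rw [hT0k]; ring
    | succ t =>
      have hmul : (G * T) t.succ k = g t * T t.castSucc k := by
        rw [Matrix.mul_apply, Finset.sum_eq_single t.castSucc]
        · simp [hGrow]
        · intro b _ hb; simp [hGrow, hb]
        · simp
      rw [hmul]
      by_cases hk : k = t.succ
      · subst hk
        rw [if_pos rfl, hTdiag]
        have hTc : T t.castSucc t.succ = Δ⁻¹ * (h * ∏ s ∈ Finset.univ.erase t, g s) := by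
          have hfil : Finset.univ.filter
              (fun s : Fin n => (t : ℕ) + 1 ≤ (s : ℕ) ∨ (s : ℕ) < (t : ℕ))
              = Finset.univ.erase t := by
            ext s
            simp [Fin.ext_iff]
            omega
          simp only [hTdef, Fin.coe_castSucc, Fin.val_succ,
            if_neg (by omega : ¬ (t : ℕ) + 1 ≤ (t : ℕ)), hfil]
        rw [hTc]
        have hprod : g t * ∏ s ∈ Finset.univ.erase t, g s = ∏ s, g s := by
          rw [← Finset.mul_prod_erase Finset.univ g (Finset.mem_univ t)]
        have h3 : Δ⁻¹ * Δ = 1 := inv_mul_cancel₀ hΔ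
        rw [← h3, hΔdef, ← hprod]
        ring
      · rw [if_neg (fun hh' => hk hh'.symm)]
        have hkv : (k : ℕ) ≠ (t : ℕ) + 1 := by
          intro hv; exact hk (Fin.ext (by simpa using hv))
        rcases le_or_gt (k : ℕ) (t : ℕ) with hle | hgt
        · -- both in the "if" branch
          have hfil : Finset.univ.filter
              (fun s : Fin n => (k : ℕ) ≤ (s : ℕ) ∧ (s : ℕ) < (t : ℕ) + 1)
              = insert t (Finset.univ.filter
                (fun s : Fin n => (k : ℕ) ≤ (s : ℕ) ∧ (s : ℕ) < (t : ℕ))) := by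
            ext s; simp [Fin.ext_iff]; omega
          have hnot : t ∉ Finset.univ.filter
              (fun s : Fin n => (k : ℕ) ≤ (s : ℕ) ∧ (s : ℕ) < (t : ℕ)) := by
            simp
          have h1 : T t.succ k = Δ⁻¹ * (g t * ∏ s ∈ Finset.univ.filter
              (fun s : Fin n => (k : ℕ) ≤ (s : ℕ) ∧ (s : ℕ) < (t : ℕ)), g s) := by
            simp only [hTdef, Fin.val_succ, if_pos (by omega : (k : ℕ) ≤ (t : ℕ) + 1), hfil,
              Finset.prod_insert hnot]
          have h2 : T t.castSucc k = Δ⁻¹ * ∏ s ∈ Finset.univ.filter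
              (fun s : Fin n => (k : ℕ) ≤ (s : ℕ) ∧ (s : ℕ) < (t : ℕ)), g s := by
            simp only [hTdef, Fin.coe_castSucc, if_pos hle]
          rw [h1, h2]; ring
        · -- both in the "else" branch, k ≥ t + 2
          have hge : (t : ℕ) + 2 ≤ (k : ℕ) := by omega
          have hfil : Finset.univ.filter
              (fun s : Fin n => (k : ℕ) ≤ (s : ℕ) ∨ (s : ℕ) < (t : ℕ) + 1)
              = insert t (Finset.univ.filter
                (fun s : Fin n => (k : ℕ) ≤ (s : ℕ) ∨ (s : ℕ) < (t : ℕ))) := by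
            ext s; simp [Fin.ext_iff]; omega
          have hnot : t ∉ Finset.univ.filter
              (fun s : Fin n => (k : ℕ) ≤ (s : ℕ) ∨ (s : ℕ) < (t : ℕ)) := by
            simp; omega
          have h1 : T t.succ k = Δ⁻¹ * (h * (g t * ∏ s ∈ Finset.univ.filter
              (fun s : Fin n => (k : ℕ) ≤ (s : ℕ) ∨ (s : ℕ) < (t : ℕ)), g s)) := by
            simp only [hTdef, Fin.val_succ, if_neg (by omega : ¬ (k : ℕ) ≤ (t : ℕ) + 1), hfil,
              Finset.prod_insert hnot]
          have h2 : T t.castSucc k = Δ⁻¹ * (h * ∏ s ∈ Finset.univ.filter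
              (fun s : Fin n => (k : ℕ) ≤ (s : ℕ) ∨ (s : ℕ) < (t : ℕ)), g s) := by
            simp only [hTdef, Fin.coe_castSucc, if_neg (by omega : ¬ (k : ℕ) ≤ (t : ℕ))]
          rw [h1, h2]; ring
  have hinv : (1 - G)⁻¹ = T := Matrix.inv_eq_right_inv key
  rw [hinv]
  have hP : (∏ t, g t) ≠ 0 := Finset.prod_ne_zero_iff.mpr fun s _ => hg s
  refine ⟨hTdiag _, ?_, ?_, ?_⟩
  · intro j
    exact hTlast j.castSucc
  · intro j
    rw [hTlast, hTlast]
    have hB : (∏ s ∈ Finset.univ.filter (fun s : Fin n => ((j.succ : Fin (n+1)) : ℕ) ≤ (s : ℕ)), g s) ≠ 0 :=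
      Finset.prod_ne_zero_iff.mpr fun s _ => hg s
    have hfil : Finset.univ.filter (fun s : Fin n => ((j.castSucc : Fin (n+1)) : ℕ) ≤ (s : ℕ))
        = insert j (Finset.univ.filter (fun s : Fin n => ((j.succ : Fin (n+1)) : ℕ) ≤ (s : ℕ))) := by
      ext s; simp [Fin.ext_iff]; omega
    have hnot : j ∉ Finset.univ.filter (fun s : Fin n => ((j.succ : Fin (n+1)) : ℕ) ≤ (s : ℕ)) := by
      simp
    rw [hfil, Finset.prod_insert hnot,
      mul_div_mul_left _ _ (inv_ne_zero hΔ), mul_div_assoc, div_self hB, mul_one]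
  · rw [hTdiag, one_div, inv_inv, hΔdef]
    field_simp
    ring
end
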